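/- For fixed $\Delta t > 0$ and $\lambda_s \in \mathbb{R}$, with $Q^{\mathrm{fast}}_\Delta$ invertible, the error propagation matrix $E(\lambda_f) = (I - \Delta t(i\lambda_f Q^{\mathrm{fast}}_\Delta + i\lambda_s Q^{\mathrm{slow}}_\Delta))^{-1} \Delta t\,(i(\lambda_f + \lambda_s) Q - (i\lambda_f Q^{\mathrm{fast}}_\Delta + i\lambda_s Q^{\mathrm{slow}}_\Delta))$ converges entrywise, as $\lambda_f \to \infty$, to the limit matrix $E_\infty = I - (Q^{\mathrm{fast}}_\Delta)^{-1} Q$. -/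
import Mathlib


open Filter Topology

/-- Stiff limit of the fast-wave slow-wave SDC error propagation matrix: as
`λ_f → ∞` the matrix
`E(λf) = (I - Δt(iλf Qf + iλs Qs))⁻¹ Δt (i(λf+λs) Q - (iλf Qf + iλs Qs))`
converges entrywise to `E_∞ = I - Qf⁻¹ Q`. -/
theorem sdc_stiff_limit (M : ℕ)
    (Q Qf Qs : Matrix (Fin M) (Fin M) ℝ) (hQf : Invertible Qf)
    (ls Δt : ℝ) (hΔt : 0 < Δt)
    (E : ℝ → Matrix (Fin M) (Fin M) ℂ)
    (hE : ∀ lf : ℝ, E lf =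
      (1 - (Δt : ℂ) • ((Complex.I * (lf : ℂ)) • Qf.map Complex.ofReal +
        (Complex.I * (ls : ℂ)) • Qs.map Complex.ofReal))⁻¹ *
      ((Δt : ℂ) • ((Complex.I * ((lf : ℂ) + (ls : ℂ))) • Q.map Complex.ofReal -
        ((Complex.I * (lf : ℂ)) • Qf.map Complex.ofReal +
          (Complex.I * (ls : ℂ)) • Qs.map Complex.ofReal))))
    (Einf : Matrix (Fin M) (Fin M) ℂ)
    (hEinf : Einf = 1 - (Qf⁻¹ * Q).map Complex.ofReal) :
    ∀ i j, Tendsto (fun lf : ℝ => E lf i j) atTop (𝓝 (Einf i j)) := by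
  set QC : Matrix (Fin M) (Fin M) ℂ := Q.map Complex.ofReal with hQC
  set QfC : Matrix (Fin M) (Fin M) ℂ := Qf.map Complex.ofReal with hQfCdef
  set QsC : Matrix (Fin M) (Fin M) ℂ := Qs.map Complex.ofReal with hQsC
  have hΔne : (Δt : ℂ) ≠ 0 := by
    exact_mod_cast hΔt.ne'
  haveI hQfC : Invertible QfC :=
    hQf.map (Complex.ofRealHom.mapMatrix : Matrix (Fin M) (Fin M) ℝ →+* _)
  have hdetQfC : IsUnit QfC.det := QfC.isUnit_det_of_invertible
  have hofr : ⇑Complex.ofRealHom = Complex.ofReal := rfl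
  have hmapinv : QfC⁻¹ = (Qf⁻¹).map Complex.ofReal := by
    apply Matrix.inv_eq_left_inv
    rw [hQfCdef]
    simp only [← hofr, ← Matrix.map_mul]
    rw [Matrix.nonsing_inv_mul _ Qf.isUnit_det_of_invertible, Matrix.map_one]
    · exact Complex.ofReal_zero
    · exact Complex.ofReal_one
  -- the limit matrix
  have hneg_inv : (-QfC)⁻¹ = -(QfC⁻¹) := by
    apply Matrix.inv_eq_left_inv
    rw [neg_mul_neg, Matrix.nonsing_inv_mul _ hdetQfC]
  have hQfQ : (Qf⁻¹ * Q).map Complex.ofReal = QfC⁻¹ * QC := by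
    simp only [← hofr, Matrix.map_mul]
    rw [hofr, ← hmapinv, ← hQC]
  have hL : (-QfC)⁻¹ * (QC - QfC) = Einf := by
    rw [hneg_inv, hEinf, hQfQ, neg_mul, mul_sub, Matrix.nonsing_inv_mul _ hdetQfC, neg_sub]
  -- scalar limits
  have hr : Tendsto (fun lf : ℝ => ((lf⁻¹ : ℝ) : ℂ)) atTop (𝓝 0) := by
    have := (Complex.continuous_ofReal.tendsto 0).comp tendsto_inv_atTop_zero
    simpa [Function.comp_def] using this
  set B : ℝ → Matrix (Fin M) (Fin M) ℂ := fun lf =>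
    ((Complex.I * Δt)⁻¹ * ((lf⁻¹ : ℝ) : ℂ)) • (1 : Matrix (Fin M) (Fin M) ℂ) - QfC
      - ((ls : ℂ) * ((lf⁻¹ : ℝ) : ℂ)) • QsC with hBdef
  set C : ℝ → Matrix (Fin M) (Fin M) ℂ := fun lf =>
    (1 + (ls : ℂ) * ((lf⁻¹ : ℝ) : ℂ)) • QC - QfC
      - ((ls : ℂ) * ((lf⁻¹ : ℝ) : ℂ)) • QsC with hCdef
  have h1 : Tendsto (fun lf : ℝ => (Complex.I * Δt)⁻¹ * ((lf⁻¹ : ℝ) : ℂ)) atTop (𝓝 0) := by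
    simpa using hr.const_mul ((Complex.I * Δt)⁻¹)
  have h2 : Tendsto (fun lf : ℝ => (ls : ℂ) * ((lf⁻¹ : ℝ) : ℂ)) atTop (𝓝 0) := by
    simpa using hr.const_mul ((ls : ℂ))
  have hB : Tendsto B atTop (𝓝 (-QfC)) := by
    have : Tendsto B atTop (𝓝 ((0 : ℂ) • (1 : Matrix (Fin M) (Fin M) ℂ) - QfC
        - (0 : ℂ) • QsC)) :=
      ((h1.smul_const _).sub tendsto_const_nhds).sub (h2.smul_const _)
    simpa using this
  have hC : Tendsto C atTop (𝓝 (QC - QfC)) := by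
    have : Tendsto C atTop (𝓝 ((1 + (0 : ℂ)) • QC - QfC - (0 : ℂ) • QsC)) :=
      (((tendsto_const_nhds.add h2).smul_const _).sub tendsto_const_nhds).sub
        (h2.smul_const _)
    simpa using this
  -- inverse is continuous at -QfC
  haveI : Invertible (-QfC) := invertibleNeg QfC
  have hdetneg : IsUnit (-QfC).det := (-QfC).isUnit_det_of_invertible
  have hBinv : Tendsto (fun lf => (B lf)⁻¹) atTop (𝓝 ((-QfC)⁻¹)) := by
    refine ((continuousAt_matrix_inv (-QfC) ?_).tendsto.comp hB)
    obtain ⟨u, hu⟩ := hdetneg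
    exact hu ▸ NormedRing.inverse_continuousAt u
  have hF : Tendsto (fun lf => (B lf)⁻¹ * C lf) atTop (𝓝 ((-QfC)⁻¹ * (QC - QfC))) :=
    hBinv.mul hC
  -- eventual equality
  have heq : ∀ᶠ lf : ℝ in atTop, E lf = (B lf)⁻¹ * C lf := by
    filter_upwards [eventually_gt_atTop 0] with lf hlf
    have hlfne : (lf : ℂ) ≠ 0 := by exact_mod_cast hlf.ne'
    set c : ℂ := Complex.I * lf * Δt with hc
    have hcne : c ≠ 0 := by
      simp [hc, Complex.I_ne_zero, hlfne, hΔne]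
    have hA : (1 - (Δt : ℂ) • ((Complex.I * (lf : ℂ)) • QfC +
        (Complex.I * (ls : ℂ)) • QsC)) = c • B lf := by
      simp only [hBdef, hc]
      push_cast
      match_scalars <;> field_simp <;> ring
    have hR : ((Δt : ℂ) • ((Complex.I * ((lf : ℂ) + (ls : ℂ))) • QC -
        ((Complex.I * (lf : ℂ)) • QfC + (Complex.I * (ls : ℂ)) • QsC))) = c • C lf := by
      simp only [hCdef, hc]
      push_cast
      match_scalars <;> field_simp <;> ring
    rw [hE lf, hA, hR]
    by_cases hdet : IsUnit (B lf).det
    · haveI : Invertible c := invertibleOfNonzero hcne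
      rw [Matrix.inv_smul (A := B lf) c hdet, invOf_eq_inv, smul_mul_assoc, Matrix.mul_smul,
        smul_smul, inv_mul_cancel₀ hcne, one_smul]
    · have hB0 : (B lf)⁻¹ = 0 := Matrix.nonsing_inv_apply_not_isUnit _ hdet
      have hcB0 : (c • B lf)⁻¹ = 0 := by
        apply Matrix.nonsing_inv_apply_not_isUnit
        rw [Matrix.det_smul]
        intro h
        exact hdet (isUnit_of_mul_isUnit_right h)
      rw [hB0, hcB0, Matrix.zero_mul, Matrix.zero_mul]
  have hEtend : Tendsto E atTop (𝓝 Einf) := by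
    rw [← hL]
    exact hF.congr' (heq.mono fun lf h => h.symm)
  intro i j
  have hcont : Continuous (fun A : Matrix (Fin M) (Fin M) ℂ => A i j) :=
    (continuous_apply j).comp (continuous_apply i)
  exact (hcont.tendsto Einf).comp hEtend
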